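/- Let w ∈ S_n. Suppose u is both special k-superior and special (k−1)-superior to w of degree p (equivalently, no cycle of w⁻¹u involves the index k). Then for every q < k, u·t_{q,k} is not special (k−1)-superior to w of degree p−1, and for every q' > k, u·t_{k,q'} is not special (k−1)-superior to w of degree p−1. -/

import Mathlib

open Equiv MvPolynomial
open scoped Classical

/-- Coxeter length of a permutation of `Fin n`: the number of inversions. -/
noncomputable def len {n : ℕ} (w : Equiv.Perm (Fin n)) : ℕ :=
  (Finset.univ.filter (fun p : Fin n × Fin n => p.1 < p.2 ∧ w p.2 < w p.1)).card

/-- The simple reflection swapping the 0-based positions `a` and `a+1`;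
this is the 1-based simple reflection `s_{a+1}`. -/
def sr0 (n : ℕ) (a : ℕ) : Equiv.Perm (Fin n) :=
  if h : a + 1 < n then Equiv.swap ⟨a, Nat.lt_of_succ_lt h⟩ ⟨a + 1, h⟩ else 1

/-- `c[k,m] = s_{k-m+1} ⋯ s_{k-1} s_k` (1-based indices), with `c[k,0] = e`. -/
def cyc (n k m : ℕ) : Equiv.Perm (Fin n) :=
  ((List.range m).map (fun t => sr0 n (k - m + t))).prod

/-- The coordinate weight `L_i` (1-based), i.e. the variable `X (i-1)`. -/
noncomputable def LL (n : ℕ) (i : ℕ) : MvPolynomial (Fin n) ℚ :=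
  if h : i - 1 < n then X ⟨i - 1, h⟩ else 0

/-- The simple root `α_{a+1} = L_{a+1} - L_{a+2}` (0-based `a`). -/
noncomputable def alphaR (n a : ℕ) : MvPolynomial (Fin n) ℚ :=
  if h : a + 1 < n then X ⟨a, Nat.lt_of_succ_lt h⟩ - X ⟨a + 1, h⟩ else 0

/-- The fundamental weight `χ_i = L_1 + ⋯ + L_i` (1-based `i`). -/
noncomputable def chiW (n i : ℕ) : MvPolynomial (Fin n) ℚ :=
  ∑ j ∈ Finset.univ.filter (fun j : Fin n => (j : ℕ) < i), X j

/-- `∏_{β ∈ Δ₊ ∩ w⁻¹Δ₋} β`, the value `ξ^w(w)`. -/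
noncomputable def topVal {n : ℕ} (w : Equiv.Perm (Fin n)) : MvPolynomial (Fin n) ℚ :=
  ∏ p ∈ Finset.univ.filter (fun p : Fin n × Fin n => p.1 < p.2 ∧ w p.2 < w p.1),
    (X p.1 - X p.2)

/-- Bruhat order on the symmetric group. -/
def bruhatLE {n : ℕ} (w v : Equiv.Perm (Fin n)) : Prop :=
  Relation.ReflTransGen
    (fun x y => (∃ i j : Fin n, y = x * Equiv.swap i j) ∧ len y = len x + 1) w v

/-- The characterization of the family of equivariant Schubert classes `ξ^w : W → S(h*)`:
support condition, value at `w`, and the divided-difference recursion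
`𝒜_a ξ^w = ξ^{w s_a}` if `w s_a < w` and `0` otherwise, where
`(𝒜_a f)(v) = (f(v s_a) - f(v))/(v·α_a)`. -/
def IsXi {n : ℕ} (xi : Equiv.Perm (Fin n) → Equiv.Perm (Fin n) → MvPolynomial (Fin n) ℚ) :
    Prop :=
  (∀ w v, ¬ bruhatLE w v → xi w v = 0) ∧
  (∀ w, xi w w = topVal w) ∧
  (∀ w v (a : ℕ), a + 1 < n →
    (len (w * sr0 n a) < len w →
      xi w (v * sr0 n a) - xi w v = (rename ⇑v (alphaR n a)) * xi (w * sr0 n a) v) ∧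
    (len w < len (w * sr0 n a) → xi w (v * sr0 n a) = xi w v))

/-- The permutation `t_{i_1,q} ⋯ t_{i_s,q}` determined by the list `l = [i_1, …, i_s]`
and the index `q`. -/
def cycPerm {n : ℕ} (l : List (Fin n)) (q : Fin n) : Equiv.Perm (Fin n) :=
  (l.map (fun i => Equiv.swap i q)).prod

/-- The data `(l, q)` with `l = [i_1, …, i_s]` defines a cycle `ζ = t_{i_1,q} ⋯ t_{i_s,q}`
such that `wζ` is special `k`-superior to `w` of degree `s` (1-based `k`):
`i_1, …, i_s ≤ k < q`, `w(q) > w(i_1) > ⋯ > w(i_s)`, and `ℓ(wζ) = ℓ(w) + s`. -/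
def IsSpecialCycle {n : ℕ} (w : Equiv.Perm (Fin n)) (k : ℕ) (l : List (Fin n)) (q : Fin n) :
    Prop :=
  l ≠ [] ∧ (q :: l).Nodup ∧ (∀ i ∈ l, (i : ℕ) < k) ∧ k ≤ (q : ℕ) ∧
  (q :: l).Chain' (fun a b => w b < w a) ∧
  len (w * cycPerm l q) = len w + l.length

/-- `u` is special `k`-superior to `w` of degree `p` (1-based `k`):
`u = w ζ₁ ⋯ ζ_r` for pairwise disjoint cycles `ζ_i` as in `IsSpecialCycle`,
with degrees summing to `p`. -/
def SpecialSuperior {n : ℕ} (w u : Equiv.Perm (Fin n)) (k p : ℕ) : Prop :=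
  ∃ L : List (List (Fin n) × Fin n),
    (∀ c ∈ L, IsSpecialCycle w k c.1 c.2) ∧
    L.Pairwise (fun c d => ∀ x ∈ c.2 :: c.1, x ∉ d.2 :: d.1) ∧
    u = w * (L.map (fun c => cycPerm c.1 c.2)).prod ∧
    (L.map (fun c => c.1.length)).sum = p

/-- The set of indices of `u > w`: `𝓘 = {i ≤ k | w⁻¹u(i) ≠ i}` (stored 0-based,
so `i` ranges over 0-based positions `< k`). -/
noncomputable def idxSet {n : ℕ} (w u : Equiv.Perm (Fin n)) (k : ℕ) : Finset ℕ :=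
  (Finset.range k).filter (fun i => ∃ h : i < n, (w⁻¹ * u) ⟨i, h⟩ ≠ ⟨i, h⟩)

/-- The 0-based positions `< k` not in `𝓘`, listed in decreasing order; its `(j-1)`-st
entry is the 0-based version of `r_j`. -/
noncomputable def freeList {n : ℕ} (w u : Equiv.Perm (Fin n)) (k : ℕ) : List ℕ :=
  (((Finset.range k) \ idxSet w u k).sort (· ≤ ·)).reverse

/-- `λ_j = #{i ∈ 𝓘 | i < r_j}` (1-based `j`). -/
noncomputable def lamFn {n : ℕ} (w u : Equiv.Perm (Fin n)) (k : ℕ) (j : ℕ) : ℕ :=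
  ((idxSet w u k).filter (fun i => i < (freeList w u k).getD (j - 1) 0)).card

/-- The associated element `v(u,w,k) = w π₁ π₂ ⋯ π_{k-p}` where
`π_j = s_{λ_{k-p-j+1}+j-1} ⋯ s_{j+1} s_j` (1-based) if `λ_{k-p-j+1} ≠ 0` and `π_j = e`
otherwise. -/
noncomputable def assocElt {n : ℕ} (w u : Equiv.Perm (Fin n)) (k p : ℕ) :
    Equiv.Perm (Fin n) :=
  w * ((List.range (k - p)).map (fun j0 =>
        ((List.range (lamFn w u k (k - p - j0))).reverse.map
          (fun t => sr0 n (j0 + t))).prod)).prod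

section Aux

variable {n : ℕ}

lemma cycPerm_cons (a : Fin n) (l : List (Fin n)) (q : Fin n) :
    cycPerm (a :: l) q = Equiv.swap a q * cycPerm l q := by
  simp [cycPerm]

lemma cycPerm_fix {l : List (Fin n)} {q x : Fin n} (hx : x ∉ l) (hq : x ≠ q) :
    cycPerm l q x = x := by
  induction l with
  | nil => rfl
  | cons a t ih =>
    simp only [List.mem_cons, not_or] at hx
    rw [cycPerm_cons, Equiv.Perm.mul_apply, ih hx.2,
      Equiv.swap_apply_of_ne_of_ne hx.1 hq]

lemma cycPerm_mem {l : List (Fin n)} {q x : Fin n} (hx : x ∈ q :: l) :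
    cycPerm l q x ∈ q :: l := by
  by_contra h
  simp only [List.mem_cons, not_or] at h
  have h2 : cycPerm l q (cycPerm l q x) = cycPerm l q x := cycPerm_fix h.2 h.1
  have := (cycPerm l q).injective h2
  rw [this] at h
  simp only [List.mem_cons] at hx
  rcases hx with h' | h' <;> simp [h'] at h

lemma cycPerm_moves {l : List (Fin n)} {q : Fin n} (hnd : (q :: l).Nodup) :
    ∀ i ∈ l, cycPerm l q i ≠ i := by
  induction l with
  | nil => simp
  | cons a t ih =>
    intro i hi
    simp only [List.nodup_cons, List.mem_cons, not_or] at hnd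
    obtain ⟨⟨hqa, hqt⟩, hat, hnt⟩ := hnd
    rcases List.mem_cons.mp hi with rfl | hit
    · rw [cycPerm_cons, Equiv.Perm.mul_apply, cycPerm_fix hat (Ne.symm hqa),
        Equiv.swap_apply_left]
      exact hqa
    · have hnd' : (q :: t).Nodup := List.nodup_cons.mpr ⟨hqt, hnt⟩
      have hy := ih hnd' i hit
      have hym : cycPerm t q i ∈ q :: t := cycPerm_mem (List.mem_cons_of_mem q hit)
      rw [cycPerm_cons, Equiv.Perm.mul_apply]
      rcases List.mem_cons.mp hym with hq' | ht'
      · rw [hq', Equiv.swap_apply_right]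
        intro h; exact hat (h ▸ hit)
      · have h1 : cycPerm t q i ≠ a := fun h => hat (h ▸ ht')
        have h2 : cycPerm t q i ≠ q := fun h => hqt (h ▸ ht')
        rw [Equiv.swap_apply_of_ne_of_ne h1 h2]; exact hy

lemma prod_fix {L : List (List (Fin n) × Fin n)} {x : Fin n}
    (hx : ∀ c ∈ L, x ∉ c.2 :: c.1) :
    (L.map (fun c => cycPerm c.1 c.2)).prod x = x := by
  induction L with
  | nil => rfl
  | cons d L' ih =>
    have hd := hx d List.mem_cons_self
    simp only [List.mem_cons, not_or] at hd
    rw [List.map_cons, List.prod_cons, Equiv.Perm.mul_apply,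
      ih (fun c hc => hx c (List.mem_cons_of_mem d hc)), cycPerm_fix hd.2 hd.1]

lemma prod_moves {L : List (List (Fin n) × Fin n)}
    (hdisj : L.Pairwise (fun c d => ∀ x ∈ c.2 :: c.1, x ∉ d.2 :: d.1))
    (hnd : ∀ c ∈ L, (c.2 :: c.1).Nodup)
    {c : List (Fin n) × Fin n} (hc : c ∈ L) {i : Fin n} (hi : i ∈ c.1) :
    (L.map (fun c => cycPerm c.1 c.2)).prod i ≠ i ∧
      (L.map (fun c => cycPerm c.1 c.2)).prod i ∈ c.2 :: c.1 := by
  induction L with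
  | nil => exact absurd hc List.not_mem_nil
  | cons d L' ih =>
    rw [List.pairwise_cons] at hdisj
    obtain ⟨hdL', hdisj'⟩ := hdisj
    rw [List.map_cons, List.prod_cons, Equiv.Perm.mul_apply]
    rcases List.mem_cons.mp hc with rfl | hcL'
    · have hfix : (L'.map (fun c => cycPerm c.1 c.2)).prod i = i :=
        prod_fix (fun e he => hdL' e he i (List.mem_cons_of_mem _ hi))
      rw [hfix]
      exact ⟨cycPerm_moves (hnd c List.mem_cons_self) i hi,
        cycPerm_mem (List.mem_cons_of_mem _ hi)⟩
    · have hy := ih hdisj' (fun e he => hnd e (List.mem_cons_of_mem d he)) hcL'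
      have hnotd : (L'.map (fun c => cycPerm c.1 c.2)).prod i ∉ d.2 :: d.1 := by
        intro h
        exact hdL' c hcL' _ h hy.2
      simp only [List.mem_cons, not_or] at hnotd
      rw [cycPerm_fix hnotd.2 hnotd.1]
      exact hy

lemma count_moved {w u : Equiv.Perm (Fin n)} {k' p' : ℕ}
    (h : SpecialSuperior w u k' p') :
    (Finset.univ.filter (fun i : Fin n => (i : ℕ) < k' ∧ (w⁻¹ * u) i ≠ i)).card = p' := by
  classical
  obtain ⟨L, hcyc, hdisj, hu, hsum⟩ := h
  have hg : w⁻¹ * u = (L.map (fun c => cycPerm c.1 c.2)).prod := by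
    rw [hu]; group
  have hnd : ∀ c ∈ L, (c.2 :: c.1).Nodup := fun c hc => (hcyc c hc).2.1
  have hset : Finset.univ.filter (fun i : Fin n => (i : ℕ) < k' ∧ (w⁻¹ * u) i ≠ i)
      = ((L.map Prod.fst).flatten).toFinset := by
    ext i
    simp only [Finset.mem_filter, Finset.mem_univ, true_and, List.mem_toFinset,
      List.mem_flatten, List.mem_map]
    constructor
    · rintro ⟨hik, hmoved⟩
      by_contra hno
      push_neg at hno
      apply hmoved
      rw [hg]
      apply prod_fix
      intro c hc
      intro hmem
      rcases List.mem_cons.mp hmem with h' | h'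
      · have hq := (hcyc c hc).2.2.2.1
        rw [h'] at hik
        omega
      · exact hno c.1 ⟨c, hc, rfl⟩ h'
    · rintro ⟨l', ⟨c, hc, rfl⟩, hil⟩
      refine ⟨(hcyc c hc).2.2.1 i hil, ?_⟩
      rw [hg]
      exact (prod_moves hdisj hnd hc hil).1
  rw [hset]
  have hndflat : ((L.map Prod.fst).flatten).Nodup := by
    rw [List.nodup_flatten]
    constructor
    · rintro l' hl'
      rw [List.mem_map] at hl'
      obtain ⟨c, hc, rfl⟩ := hl'
      exact (List.nodup_cons.mp (hnd c hc)).2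
    · rw [List.pairwise_map]
      refine hdisj.imp ?_
      intro c d h x hx hxd
      exact h x (List.mem_cons_of_mem _ hx) (List.mem_cons_of_mem _ hxd)
  rw [List.toFinset_card_of_nodup hndflat, List.length_flatten, List.map_map]
  exact hsum

lemma superior_zero {w u : Equiv.Perm (Fin n)} {k' : ℕ}
    (h : SpecialSuperior w u k' 0) : u = w := by
  obtain ⟨L, hcyc, _, hu, hsum⟩ := h
  cases L with
  | nil => simpa using hu
  | cons c L' =>
    exfalso
    have h1 := (hcyc c List.mem_cons_self).1
    have : c.1.length ≠ 0 := fun h => h1 (List.length_eq_zero_iff.mp h)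
    simp only [List.map_cons, List.sum_cons] at hsum
    omega

end Aux

theorem stmt4 {n : ℕ} (w u : Equiv.Perm (Fin n)) (k p : ℕ) (kf : Fin n)
    (hkf : (kf : ℕ) = k - 1) (hk1 : 1 ≤ k)
    (h1 : SpecialSuperior w u k p) (h2 : SpecialSuperior w u (k - 1) p) :
    (∀ q : Fin n, (q : ℕ) < k - 1 →
      ¬ SpecialSuperior w (u * Equiv.swap q kf) (k - 1) (p - 1)) ∧
    (∀ q' : Fin n, k ≤ (q' : ℕ) →
      ¬ SpecialSuperior w (u * Equiv.swap kf q') (k - 1) (p - 1)) := by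
  classical
  have hkk : k - 1 < k := by omega
  have hFk : (Finset.univ.filter (fun i : Fin n => (i : ℕ) < k ∧ (w⁻¹ * u) i ≠ i)).card = p :=
    count_moved h1
  have hFK : (Finset.univ.filter
      (fun i : Fin n => (i : ℕ) < k - 1 ∧ (w⁻¹ * u) i ≠ i)).card = p := count_moved h2
  have hsub : (Finset.univ.filter (fun i : Fin n => (i : ℕ) < k - 1 ∧ (w⁻¹ * u) i ≠ i)) ⊆
      (Finset.univ.filter (fun i : Fin n => (i : ℕ) < k ∧ (w⁻¹ * u) i ≠ i)) := by
    intro i hi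
    simp only [Finset.mem_filter, Finset.mem_univ, true_and] at hi ⊢
    exact ⟨by omega, hi.2⟩
  have heqF : (Finset.univ.filter (fun i : Fin n => (i : ℕ) < k - 1 ∧ (w⁻¹ * u) i ≠ i)) =
      (Finset.univ.filter (fun i : Fin n => (i : ℕ) < k ∧ (w⁻¹ * u) i ≠ i)) :=
    Finset.eq_of_subset_of_card_le hsub (by omega)
  have hgkf : (w⁻¹ * u) kf = kf := by
    by_contra hcon
    have hmem : kf ∈ Finset.univ.filter (fun i : Fin n => (i : ℕ) < k ∧ (w⁻¹ * u) i ≠ i) := by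
      simp only [Finset.mem_filter, Finset.mem_univ, true_and]
      exact ⟨by omega, hcon⟩
    rw [← heqF] at hmem
    simp only [Finset.mem_filter, Finset.mem_univ, true_and] at hmem
    omega
  constructor
  · intro q hq hbad
    have hcard := count_moved hbad
    have hqkf : q ≠ kf := by
      intro h
      rw [h] at hq
      omega
    have hg'q : (w⁻¹ * (u * Equiv.swap q kf)) q = kf := by
      rw [← mul_assoc, Equiv.Perm.mul_apply, Equiv.swap_apply_left, hgkf]
    have hsub2 : insert q (Finset.univ.filter
        (fun i : Fin n => (i : ℕ) < k - 1 ∧ (w⁻¹ * u) i ≠ i)) ⊆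
        Finset.univ.filter
          (fun i : Fin n => (i : ℕ) < k - 1 ∧ (w⁻¹ * (u * Equiv.swap q kf)) i ≠ i) := by
      intro i hi
      simp only [Finset.mem_insert, Finset.mem_filter, Finset.mem_univ, true_and] at hi ⊢
      rcases hi with rfl | ⟨hik, hmoved⟩
      · exact ⟨hq, by rw [hg'q]; exact Ne.symm hqkf⟩
      · by_cases hiq : i = q
        · subst hiq
          exact ⟨hik, by rw [hg'q]; exact Ne.symm hqkf⟩
        · have hikf : i ≠ kf := by
            intro h
            rw [h] at hik
            omega
          refine ⟨hik, ?_⟩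
          rw [← mul_assoc, Equiv.Perm.mul_apply, Equiv.swap_apply_of_ne_of_ne hiq hikf]
          exact hmoved
    have hc1 := Finset.card_le_card hsub2
    have hc2 := Finset.card_le_card (Finset.subset_insert q
      (Finset.univ.filter (fun i : Fin n => (i : ℕ) < k - 1 ∧ (w⁻¹ * u) i ≠ i)))
    have hc3 : 0 < (insert q (Finset.univ.filter
        (fun i : Fin n => (i : ℕ) < k - 1 ∧ (w⁻¹ * u) i ≠ i))).card :=
      Finset.card_pos.mpr ⟨q, Finset.mem_insert_self q _⟩
    rw [hcard] at hc1
    omega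
  · intro q' hq' hbad
    have hcard := count_moved hbad
    have heqF2 : Finset.univ.filter
        (fun i : Fin n => (i : ℕ) < k - 1 ∧ (w⁻¹ * (u * Equiv.swap kf q')) i ≠ i) =
        Finset.univ.filter (fun i : Fin n => (i : ℕ) < k - 1 ∧ (w⁻¹ * u) i ≠ i) := by
      apply Finset.filter_congr
      intro i _
      by_cases hik : (i : ℕ) < k - 1
      · have hikf : i ≠ kf := by
          intro h
          rw [h] at hik
          omega
        have hiq' : i ≠ q' := by
          intro h
          rw [h] at hik
          omega
        rw [← mul_assoc, Equiv.Perm.mul_apply, Equiv.swap_apply_of_ne_of_ne hikf hiq']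
      · simp [hik]
    rw [heqF2, hFK] at hcard
    have hp0 : p = 0 := by omega
    rw [hp0] at h2 hbad
    have huw : u = w := superior_zero h2
    have huw2 : u * Equiv.swap kf q' = w := superior_zero (by simpa using hbad)
    have hswap : u (Equiv.swap kf q' kf) = u kf := by
      rw [← Equiv.Perm.mul_apply, huw2, huw]
    rw [Equiv.swap_apply_left] at hswap
    have := u.injective hswap
    have : (q' : ℕ) = (kf : ℕ) := congrArg Fin.val this
    omega
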